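/- Suppose η = Σ_{r∈Σ_R} p_r K_r^{−α_min} < 1, let β ∈ (α_min,γ) ∩ (0,1], t₁ = α_min+1−β, t₂ = 1−β, and let a₁, a₂ > 0. Then the set C₂(a₁,a₂,β) = { f ∈ C₁ : f(x) ≤ a₁ x^{−t₁} on (0,1/2], f(x) ≤ a₂ (x−1/2)^{−t₂} on (1/2,1], ∫₀¹ f dλ = 1 } is compact with respect to the L¹(λ)-norm: every sequence in C₂(a₁,a₂,β) has a subsequence converging in L¹(λ) to an element of C₂(a₁,a₂,β). -/
import Mathlib


open MeasureTheory Set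

/-- Left branch of the LSV-type maps: `x ↦ x(1 + 2^α x^α)`. -/
noncomputable def lsvLeft (α x : ℝ) : ℝ := x * (1 + 2 ^ α * x ^ α)

/-- The LSV map `S_α`. -/
noncomputable def lsvMap (α : ℝ) (x : ℝ) : ℝ :=
  if x ≤ 1 / 2 then lsvLeft α x else 2 * x - 1

/-- The map `R_{α,K}`. -/
noncomputable def rMap (α K : ℝ) (x : ℝ) : ℝ :=
  if x ≤ 1 / 2 then lsvLeft α x
  else 1 / 2 + K * (x - 1 / 2) + 2 * (1 - K) * (x - 1 / 2) ^ 2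

/-- The Perron–Frobenius operator `P` of the random system, written in terms of
the inverse `y j` of the left branch of `T j`, the inverse `zr r` of the right
branch of `T r` (for `r ∈ SR`), and `z(x) = (x+1)/2`.  Here
`ξ_j(x) = (2 y_j(x))^{α_j}` and `DR_r(u) = K_r + 4(1-K_r)(u - 1/2)`. -/
noncomputable def PFop {N : ℕ} (SR : Finset (Fin N)) (p α K : Fin N → ℝ)
    (y zr : Fin N → ℝ → ℝ) (f : ℝ → ℝ) (x : ℝ) : ℝ :=
  (∑ j, p j * (f (y j x) / (1 + (α j + 1) * (2 * y j x) ^ (α j))))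
    + (∑ j ∈ SRᶜ, p j) * (f ((x + 1) / 2) / 2)
    + if 1 / 2 < x then
        ∑ r ∈ SR, p r * (f (zr r x) / (K r + 4 * (1 - K r) * (zr r x - 1 / 2)))
      else 0

/-- Membership of the set `C₀`: nonnegative, decreasing and continuous on
`(0,1/2]` and on `(1/2,1]`, and Lebesgue integrable. -/
def memC0 (f : ℝ → ℝ) : Prop :=
  (∀ x ∈ Set.Ioc (0 : ℝ) 1, 0 ≤ f x) ∧
  AntitoneOn f (Set.Ioc (0 : ℝ) (1 / 2)) ∧
  ContinuousOn f (Set.Ioc (0 : ℝ) (1 / 2)) ∧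
  AntitoneOn f (Set.Ioc (1 / 2 : ℝ) 1) ∧
  ContinuousOn f (Set.Ioc (1 / 2 : ℝ) 1) ∧
  MeasureTheory.IntegrableOn f (Set.Ioc (0 : ℝ) 1)


/-- Membership of the set `C₁`: member of `C₀` such that `x ↦ x^d f(x)` is
increasing on `(0,1/2]` and `x ↦ (x-1/2)^d f(x)` is increasing on `(1/2,1]`. -/
def memC1 (d : ℝ) (f : ℝ → ℝ) : Prop :=
  memC0 f ∧
  MonotoneOn (fun x => x ^ d * f x) (Set.Ioc (0 : ℝ) (1 / 2)) ∧
  MonotoneOn (fun x => (x - 1 / 2) ^ d * f x) (Set.Ioc (1 / 2 : ℝ) 1)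

/-- Membership of the set `C₂(a₁,a₂,β)` (with `t₁ = α_min + 1 - β`,
`t₂ = 1 - β`): member of `C₁` with `f(x) ≤ a₁ x^{-t₁}` on `(0,1/2]`,
`f(x) ≤ a₂ (x-1/2)^{-t₂}` on `(1/2,1]` and `∫₀¹ f dλ = 1`. -/
def memC2 (d t₁ t₂ a₁ a₂ : ℝ) (f : ℝ → ℝ) : Prop :=
  memC1 d f ∧
  (∀ x ∈ Set.Ioc (0 : ℝ) (1 / 2), f x ≤ a₁ * x ^ (-t₁)) ∧
  (∀ x ∈ Set.Ioc (1 / 2 : ℝ) 1, f x ≤ a₂ * (x - 1 / 2) ^ (-t₂)) ∧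
  ∫ x in Set.Ioc (0 : ℝ) 1, f x = 1

section AuxLemmas

open Filter in

private lemma sandwich_aux {c b d : ℝ} (hd : 0 < d) {g : ℝ → ℝ}
    (hmono : MonotoneOn (fun x => (x - c) ^ d * g x) (Set.Ioc c b))
    (hanti : AntitoneOn g (Set.Ioc c b)) :
    ∀ x ∈ Set.Ioc c b, ∀ y ∈ Set.Ioc c b, x ≤ y →
      g y ≤ g x ∧ g x ≤ ((y - c) / (x - c)) ^ d * g y := by
  intro x hx y hy hxy
  refine ⟨hanti hx hy hxy, ?_⟩
  have hxc : 0 < x - c := sub_pos.2 hx.1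
  have hyc : 0 < y - c := sub_pos.2 hy.1
  have h1 : (x - c) ^ d * g x ≤ (y - c) ^ d * g y := hmono hx hy hxy
  have hR : ((y - c) / (x - c)) ^ d * (x - c) ^ d = (y - c) ^ d := by
    rw [← Real.mul_rpow (by positivity) hxc.le, div_mul_cancel₀ _ hxc.ne']
  have hp : (0 : ℝ) < (x - c) ^ d := Real.rpow_pos_of_pos hxc d
  have h2 : (x - c) ^ d * g x ≤ (x - c) ^ d * (((y - c) / (x - c)) ^ d * g y) := by
    calc (x - c) ^ d * g x ≤ (y - c) ^ d * g y := h1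
    _ = (x - c) ^ d * (((y - c) / (x - c)) ^ d * g y) := by rw [← hR]; ring
  exact le_of_mul_le_mul_left h2 hp

private lemma contOn_of_sandwich {c b d : ℝ} (hd : 0 < d) {g : ℝ → ℝ}
    (hnn : ∀ x ∈ Set.Ioc c b, 0 ≤ g x)
    (hs : ∀ x ∈ Set.Ioc c b, ∀ y ∈ Set.Ioc c b, x ≤ y →
      g y ≤ g x ∧ g x ≤ ((y - c) / (x - c)) ^ d * g y) :
    ContinuousOn g (Set.Ioc c b) := by
  intro z hz
  have hzc : 0 < z - c := sub_pos.2 hz.1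
  have hgz : 0 ≤ g z := hnn z hz
  refine tendsto_iff_dist_tendsto_zero.mpr ?_
  refine squeeze_zero' (Filter.Eventually.of_forall fun _ => dist_nonneg)
    (g := fun w => ((max w z - c) / (min w z - c)) ^ d * g z - g z) ?_ ?_
  · filter_upwards [self_mem_nhdsWithin] with w hw
    rcases le_total w z with hwz | hzw
    · have hwc : 0 < w - c := sub_pos.2 hw.1
      obtain ⟨h1, h2⟩ := hs w hw z hz hwz
      have hr : 1 ≤ (z - c) / (w - c) := (one_le_div hwc).2 (by linarith)
      have hρ : 1 ≤ ((z - c) / (w - c)) ^ d := by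
        calc (1:ℝ) = 1 ^ d := (Real.one_rpow d).symm
        _ ≤ _ := Real.rpow_le_rpow (by norm_num) hr hd.le
      rw [max_eq_right hwz, min_eq_left hwz, Real.dist_eq, abs_of_nonneg (by linarith)]
      linarith
    · have hwc : 0 < w - c := sub_pos.2 hw.1
      obtain ⟨h1, h2⟩ := hs z hz w hw hzw
      have hr : 1 ≤ (w - c) / (z - c) := (one_le_div hzc).2 (by linarith)
      have hρ : 1 ≤ ((w - c) / (z - c)) ^ d := by
        calc (1:ℝ) = 1 ^ d := (Real.one_rpow d).symm
        _ ≤ _ := Real.rpow_le_rpow (by norm_num) hr hd.le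
      have hgw : 0 ≤ g w := hnn w hw
      rw [max_eq_left hzw, min_eq_right hzw, Real.dist_eq, abs_of_nonpos (by linarith)]
      nlinarith [mul_le_mul_of_nonneg_left h1 (sub_nonneg.2 hρ)]
  · have h2 : Filter.Tendsto (fun w : ℝ => (max w z - c) / (min w z - c)) (nhds z) (nhds 1) := by
      have hcont : Filter.Tendsto (fun w : ℝ => (max w z - c) / (min w z - c)) (nhds z)
          (nhds ((max z z - c) / (min z z - c))) :=
        Filter.Tendsto.div (((continuous_id.max continuous_const).sub continuous_const).tendsto z)
          (((continuous_id.min continuous_const).sub continuous_const).tendsto z)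
          (by rw [min_self]; exact sub_ne_zero.2 (ne_of_gt hz.1))
      simpa [max_self, min_self, div_self hzc.ne'] using hcont
    have h3 : ContinuousAt (fun t : ℝ => t ^ d) 1 :=
      Real.continuousAt_rpow_const 1 d (Or.inl one_ne_zero)
    have h4 := (h3.tendsto.comp h2).mul_const (g z)
    rw [Real.one_rpow, one_mul] at h4
    have h5 := h4.sub_const (g z)
    rw [sub_self] at h5
    exact (h5.comp (Filter.tendsto_id)).mono_left nhdsWithin_le_nhds |>.congr (fun w => by simp [Function.comp])

private lemma tendsto_pt {c b d : ℝ} (hd : 0 < d) (h : ℕ → ℝ → ℝ)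
    (hs : ∀ k, ∀ x ∈ Set.Ioc c b, ∀ y ∈ Set.Ioc c b, x ≤ y →
      h k y ≤ h k x ∧ h k x ≤ ((y - c) / (x - c)) ^ d * h k y)
    (hrat : ∀ q : ℚ, (q : ℝ) ∈ Set.Ioc c b →
      ∃ l, Filter.Tendsto (fun k => h k (q : ℝ)) Filter.atTop (nhds l))
    {x : ℝ} (hx : x ∈ Set.Ioc c b) {A : ℝ}
    (hA : ∀ k, ∀ y ∈ Set.Icc x b, 0 ≤ h k y ∧ h k y ≤ A)
    (hxb : (∃ q : ℚ, (q : ℝ) = x) ∨ x < b) :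
    ∃ l, Filter.Tendsto (fun k => h k x) Filter.atTop (nhds l) := by
  rcases hxb with ⟨q, hq⟩ | hxb
  · subst hq; exact hrat q hx
  have hxc : 0 < x - c := sub_pos.2 hx.1
  have hA0 : 0 ≤ A := le_trans (hA 0 x ⟨le_rfl, hx.2⟩).1 (hA 0 x ⟨le_rfl, hx.2⟩).2
  suffices hcs : CauchySeq (fun k => h k x) by exact cauchySeq_tendsto_of_complete hcs
  rw [Metric.cauchySeq_iff]
  intro ε hε
  have hε3 : 0 < ε / (3 * (A + 1)) := by positivity
  have hψ : ContinuousAt (fun y : ℝ => ((y - c) / (x - c)) ^ d) x := by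
    have h1 : ContinuousAt (fun y : ℝ => (y - c) / (x - c)) x := by fun_prop
    have h2 : ContinuousAt (fun t : ℝ => t ^ d) ((x - c) / (x - c)) := by
      rw [div_self hxc.ne']
      exact Real.continuousAt_rpow_const 1 d (Or.inl one_ne_zero)
    exact ContinuousAt.comp (f := fun y : ℝ => (y - c) / (x - c)) h2 h1
  rw [Metric.continuousAt_iff] at hψ
  obtain ⟨δ, hδ0, hδ⟩ := hψ (ε / (3 * (A + 1))) hε3
  obtain ⟨q, hq1, hq2⟩ := exists_rat_btwn (lt_min hxb (lt_add_of_pos_right x hδ0))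
  have hqx : x < (q : ℝ) := hq1
  have hqb : (q : ℝ) ≤ b := le_of_lt (lt_of_lt_of_le hq2 (min_le_left _ _))
  have hqmem : (q : ℝ) ∈ Set.Ioc c b := ⟨lt_trans hx.1 hqx, hqb⟩
  have hψq : ((q - c : ℝ) / (x - c)) ^ d - 1 < ε / (3 * (A + 1)) := by
    have hd1 : dist (q : ℝ) x < δ := by
      rw [Real.dist_eq, abs_of_pos (sub_pos.2 hqx)]
      have := lt_of_lt_of_le hq2 (min_le_right _ _); linarith
    have h2 := hδ hd1
    rw [Real.dist_eq, div_self hxc.ne', Real.one_rpow] at h2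
    calc ((q - c : ℝ) / (x - c)) ^ d - 1 ≤ |((q - c : ℝ) / (x - c)) ^ d - 1| := le_abs_self _
    _ < _ := h2
  have hψq1 : 1 ≤ ((q - c : ℝ) / (x - c)) ^ d := by
    have hr : 1 ≤ ((q : ℝ) - c) / (x - c) := (one_le_div hxc).2 (by linarith)
    calc (1:ℝ) = 1 ^ d := (Real.one_rpow d).symm
    _ ≤ _ := Real.rpow_le_rpow (by norm_num) hr hd.le
  have hest : ∀ k, dist (h k x) (h k (q : ℝ)) ≤ ε / 3 := by
    intro k
    obtain ⟨hle, hub⟩ := hs k x hx (q : ℝ) hqmem hqx.le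
    obtain ⟨hq0, hqA⟩ := hA k (q : ℝ) ⟨hqx.le, hqb⟩
    rw [Real.dist_eq, abs_of_nonneg (by linarith)]
    have h1 : h k x - h k (q : ℝ) ≤ (((q - c : ℝ) / (x - c)) ^ d - 1) * h k (q : ℝ) := by
      have : (((q - c : ℝ) / (x - c)) ^ d - 1) * h k (q : ℝ)
          = ((q - c : ℝ) / (x - c)) ^ d * h k (q : ℝ) - h k (q : ℝ) := by ring
      linarith
    have h2 : (((q - c : ℝ) / (x - c)) ^ d - 1) * h k (q : ℝ) ≤ (ε / (3 * (A + 1))) * A :=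
      mul_le_mul (le_of_lt hψq) hqA hq0 (le_of_lt hε3)
    have h3 : (ε / (3 * (A + 1))) * A ≤ ε / 3 := by
      rw [div_mul_eq_mul_div, div_le_div_iff₀ (by positivity) (by norm_num)]
      nlinarith
    linarith
  obtain ⟨l, hl⟩ := hrat q hqmem
  obtain ⟨N, hN⟩ := Metric.cauchySeq_iff.1 hl.cauchySeq (ε / 3) (by positivity)
  refine ⟨N, fun m hm n hn => ?_⟩
  calc dist (h m x) (h n x)
      ≤ dist (h m x) (h m (q : ℝ)) + dist (h m (q : ℝ)) (h n (q : ℝ))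
        + dist (h n (q : ℝ)) (h n x) := dist_triangle4 _ _ _ _
  _ < ε / 3 + ε / 3 + ε / 3 := by
      have hmid := hN m hm n hn
      have h1 := hest m
      have h2 := hest n
      rw [dist_comm (h n (q : ℝ)) (h n x)] at *
      linarith
  _ = ε := by ring

end AuxLemmas

/-- Lemma 3.5: the set `C₂(a₁,a₂,β)` is compact with respect to the `L¹(λ)`-norm:
every sequence in `C₂` has a subsequence converging in `L¹(λ)` to an element of `C₂`. -/
theorem C2_compact
    (N : ℕ) (hN : 0 < N)
    (α K : Fin N → ℝ) (SR : Finset (Fin N))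
    (hSR : SR.Nonempty) (hSS : SRᶜ.Nonempty)
    (hα : ∀ j, 0 < α j)
    (hK : ∀ r ∈ SR, K r ∈ Set.Ioo (0 : ℝ) 1)
    (p : Fin N → ℝ) (hp : ∀ j, 0 < p j) (hp1 : ∑ j, p j = 1)
    (αmin : ℝ) (hαmin : IsLeast (Set.range α) αmin) (hαmin1 : αmin < 1)
    (αmax : ℝ) (hαmax : IsGreatest (Set.range α) αmax)
    (d : ℝ) (hd : d = αmax + 2)
    (hη : ∑ r ∈ SR, p r * K r ^ (-αmin) < 1)
    (γ : ℝ) (hγ : γ = sSup {δ : ℝ | 0 ≤ δ ∧ ∑ r ∈ SR, p r * K r ^ (-δ) < 1})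
    (β : ℝ) (hβ1 : αmin < β) (hβ2 : β < γ) (hβ3 : 0 < β) (hβ4 : β ≤ 1)
    (a₁ a₂ : ℝ) (ha₁ : 0 < a₁) (ha₂ : 0 < a₂)
    (f : ℕ → ℝ → ℝ)
    (hf : ∀ n, memC2 d (αmin + 1 - β) (1 - β) a₁ a₂ (f n)) :
    ∃ g : ℝ → ℝ, memC2 d (αmin + 1 - β) (1 - β) a₁ a₂ g ∧
      ∃ φ : ℕ → ℕ, StrictMono φ ∧
        Filter.Tendsto (fun k => ∫ x in Set.Ioc (0 : ℝ) 1, |f (φ k) x - g x|)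
          Filter.atTop (nhds 0) := by
  classical
  -- positivity facts
  obtain ⟨j₀, hj₀⟩ := hαmax.1
  obtain ⟨j₁, hj₁⟩ := hαmin.1
  have hαmax0 : 0 < αmax := hj₀ ▸ hα j₀
  have hαmin0 : 0 < αmin := hj₁ ▸ hα j₁
  have hd0 : 0 < d := by rw [hd]; linarith
  have ht₁pos : 0 < αmin + 1 - β := by linarith
  have ht₁lt : αmin + 1 - β < 1 := by linarith
  have ht₂nn : 0 ≤ 1 - β := by linarith
  have ht₂lt : 1 - β < 1 := by linarith
  -- envelope
  set E : ℝ → ℝ := fun x =>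
    if x ≤ 1 / 2 then a₁ * x ^ (-(αmin + 1 - β)) else a₂ * (x - 1 / 2) ^ (-(1 - β)) with hE
  have hE1 : ∀ x : ℝ, x ≤ 1 / 2 → E x = a₁ * x ^ (-(αmin + 1 - β)) := by
    intro x hx; rw [hE]; simp only [if_pos hx]
  have hE2 : ∀ x : ℝ, ¬ x ≤ 1 / 2 → E x = a₂ * (x - 1 / 2) ^ (-(1 - β)) := by
    intro x hx; rw [hE]; simp only [if_neg hx]
  have hEbound : ∀ n, ∀ x ∈ Set.Ioc (0 : ℝ) 1, 0 ≤ f n x ∧ f n x ≤ E x := by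
    intro n x hx
    obtain ⟨⟨⟨hnn, _, _, _, _, _⟩, _, _⟩, hb1, hb2, _⟩ := hf n
    refine ⟨hnn x hx, ?_⟩
    by_cases hhalf : x ≤ 1 / 2
    · rw [hE1 x hhalf]; exact hb1 x ⟨hx.1, hhalf⟩
    · rw [hE2 x hhalf]; exact hb2 x ⟨lt_of_not_ge hhalf, hx.2⟩
  have hEnn : ∀ x ∈ Set.Ioc (0 : ℝ) 1, 0 ≤ E x :=
    fun x hx => le_trans (hEbound 0 x hx).1 (hEbound 0 x hx).2
  -- envelope integrability
  have hEint : MeasureTheory.IntegrableOn E (Set.Ioc (0 : ℝ) 1) := by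
    have hI1 : MeasureTheory.IntegrableOn (fun x : ℝ => a₁ * x ^ (-(αmin + 1 - β)))
        (Set.Ioc (0 : ℝ) (1 / 2)) := by
      have h0 : IntervalIntegrable (fun x : ℝ => x ^ (-(αmin + 1 - β))) volume 0 (1 / 2) :=
        intervalIntegral.intervalIntegrable_rpow' (by linarith)
      exact ((intervalIntegrable_iff_integrableOn_Ioc_of_le (by norm_num)).1 h0).const_mul a₁
    have hI2 : MeasureTheory.IntegrableOn (fun x : ℝ => a₂ * (x - 1 / 2) ^ (-(1 - β)))
        (Set.Ioc (1 / 2 : ℝ) 1) := by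
      have h0 : IntervalIntegrable (fun x : ℝ => x ^ (-(1 - β))) volume 0 (1 / 2) :=
        intervalIntegral.intervalIntegrable_rpow' (by linarith)
      have h1 := h0.comp_sub_right (1 / 2)
      rw [show (0:ℝ) + 1 / 2 = 1 / 2 by norm_num, show (1:ℝ) / 2 + 1 / 2 = 1 by norm_num] at h1
      exact ((intervalIntegrable_iff_integrableOn_Ioc_of_le (by norm_num)).1 h1).const_mul a₂
    have hu : MeasureTheory.IntegrableOn E (Set.Ioc (0 : ℝ) (1 / 2) ∪ Set.Ioc (1 / 2 : ℝ) 1) := by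
      refine MeasureTheory.IntegrableOn.union
        (hI1.congr_fun (fun x hx => (hE1 x hx.2).symm) measurableSet_Ioc)
        (hI2.congr_fun (fun x hx => (hE2 x (not_le.2 hx.1)).symm) measurableSet_Ioc)
    rwa [Set.Ioc_union_Ioc_eq_Ioc (by norm_num) (by norm_num)] at hu
  -- sandwich inequalities for each fₙ
  have hsand1 : ∀ n, ∀ x ∈ Set.Ioc (0 : ℝ) (1 / 2), ∀ y ∈ Set.Ioc (0 : ℝ) (1 / 2), x ≤ y →
      f n y ≤ f n x ∧ f n x ≤ ((y - 0) / (x - 0)) ^ d * f n y := by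
    intro n
    refine sandwich_aux hd0 ?_ (hf n).1.1.2.1
    have := (hf n).1.2.1
    simpa using this
  have hsand2 : ∀ n, ∀ x ∈ Set.Ioc (1 / 2 : ℝ) 1, ∀ y ∈ Set.Ioc (1 / 2 : ℝ) 1, x ≤ y →
      f n y ≤ f n x ∧ f n x ≤ ((y - 1 / 2) / (x - 1 / 2)) ^ d * f n y := by
    intro n
    exact sandwich_aux hd0 (hf n).1.2.2 (hf n).1.1.2.2.2.1
  -- subsequence extraction on rational coordinates
  set F : ℕ → ℚ → ℝ := fun n q => if (0 : ℝ) < (q : ℝ) ∧ (q : ℝ) ≤ 1 then f n q else 0 with hF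
  set Bq : ℚ → ℝ := fun q => if (0 : ℝ) < (q : ℝ) ∧ (q : ℝ) ≤ 1 then E q else 0 with hBq
  have hcomp : IsCompact (Set.pi Set.univ fun q : ℚ => Set.Icc (0 : ℝ) (Bq q)) :=
    isCompact_univ_pi fun q => isCompact_Icc
  have hFmem : ∀ n, F n ∈ Set.pi Set.univ fun q : ℚ => Set.Icc (0 : ℝ) (Bq q) := by
    intro n q _
    rw [hF, hBq]
    by_cases hq : (0 : ℝ) < (q : ℝ) ∧ (q : ℝ) ≤ 1
    · simp only [if_pos hq]
      exact ⟨(hEbound n q ⟨hq.1, hq.2⟩).1, (hEbound n q ⟨hq.1, hq.2⟩).2⟩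
    · simp only [if_neg hq]; exact ⟨le_rfl, le_rfl⟩
  obtain ⟨L, _, φ, hφ, hFtend⟩ := hcomp.tendsto_subseq hFmem
  have hrat : ∀ q : ℚ, (q : ℝ) ∈ Set.Ioc (0 : ℝ) 1 →
      Filter.Tendsto (fun k => f (φ k) (q : ℝ)) Filter.atTop (nhds (L q)) := by
    intro q hq
    have h1 := tendsto_pi_nhds.1 hFtend q
    have h2 : (fun k => (F ∘ φ) k q) = fun k => f (φ k) (q : ℝ) := by
      funext k
      simp only [Function.comp, hF, if_pos (show (0:ℝ) < (q:ℝ) ∧ (q:ℝ) ≤ 1 from ⟨hq.1, hq.2⟩)]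
    rwa [h2] at h1
  -- pointwise limits everywhere
  have hlim : ∀ x ∈ Set.Ioc (0 : ℝ) 1,
      ∃ l, Filter.Tendsto (fun k => f (φ k) x) Filter.atTop (nhds l) := by
    intro x hx
    by_cases hhalf : x ≤ 1 / 2
    · refine tendsto_pt hd0 (fun k => f (φ k)) (fun k => hsand1 (φ k)) ?_ ⟨hx.1, hhalf⟩
        (A := a₁ * x ^ (-(αmin + 1 - β))) ?_ ?_
      · intro q hq
        exact ⟨L q, hrat q ⟨hq.1, le_trans hq.2 (by norm_num)⟩⟩
      · intro k y hy
        have hy' : y ∈ Set.Ioc (0 : ℝ) 1 := ⟨lt_of_lt_of_le hx.1 hy.1, le_trans hy.2 (by norm_num)⟩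
        refine ⟨(hEbound (φ k) y hy').1, ?_⟩
        have h1 : f (φ k) y ≤ a₁ * y ^ (-(αmin + 1 - β)) :=
          (hf (φ k)).2.1 y ⟨hy'.1, hy.2⟩
        have h2 : y ^ (-(αmin + 1 - β)) ≤ x ^ (-(αmin + 1 - β)) :=
          Real.rpow_le_rpow_of_nonpos hx.1 hy.1 (by linarith)
        calc f (φ k) y ≤ a₁ * y ^ (-(αmin + 1 - β)) := h1
        _ ≤ a₁ * x ^ (-(αmin + 1 - β)) := mul_le_mul_of_nonneg_left h2 ha₁.le
      · rcases lt_or_eq_of_le hhalf with h | h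
        · exact Or.inr h
        · exact Or.inl ⟨(1 : ℚ) / 2, by push_cast; linarith⟩
    · have hhalf' : 1 / 2 < x := lt_of_not_ge hhalf
      refine tendsto_pt hd0 (fun k => f (φ k)) (fun k => hsand2 (φ k)) ?_ ⟨hhalf', hx.2⟩
        (A := a₂ * (x - 1 / 2) ^ (-(1 - β))) ?_ ?_
      · intro q hq
        exact ⟨L q, hrat q ⟨lt_trans (by norm_num) hq.1, hq.2⟩⟩
      · intro k y hy
        have hy2 : 1 / 2 < y := lt_of_lt_of_le hhalf' hy.1
        have hy' : y ∈ Set.Ioc (1 / 2 : ℝ) 1 := ⟨hy2, hy.2⟩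
        have hy'' : y ∈ Set.Ioc (0 : ℝ) 1 := ⟨lt_trans (by norm_num) hy2, hy.2⟩
        refine ⟨(hEbound (φ k) y hy'').1, ?_⟩
        have h1 : f (φ k) y ≤ a₂ * (y - 1 / 2) ^ (-(1 - β)) := (hf (φ k)).2.2.1 y hy'
        have h2 : (y - 1 / 2) ^ (-(1 - β)) ≤ (x - 1 / 2) ^ (-(1 - β)) :=
          Real.rpow_le_rpow_of_nonpos (by linarith) (by linarith [hy.1]) (by linarith)
        calc f (φ k) y ≤ a₂ * (y - 1 / 2) ^ (-(1 - β)) := h1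
        _ ≤ a₂ * (x - 1 / 2) ^ (-(1 - β)) := mul_le_mul_of_nonneg_left h2 ha₂.le
      · rcases lt_or_eq_of_le hx.2 with h | h
        · exact Or.inr h
        · exact Or.inl ⟨(1 : ℚ), by push_cast; linarith⟩
  -- the limit function
  set g : ℝ → ℝ := fun x =>
    if hx : ∃ l, Filter.Tendsto (fun k => f (φ k) x) Filter.atTop (nhds l)
    then hx.choose else 0 with hgdef
  have hg : ∀ x ∈ Set.Ioc (0 : ℝ) 1,
      Filter.Tendsto (fun k => f (φ k) x) Filter.atTop (nhds (g x)) := by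
    intro x hx
    have h := hlim x hx
    rw [hgdef]
    simp only [dif_pos h]
    exact h.choose_spec
  have hsub1 : Set.Ioc (0 : ℝ) (1 / 2) ⊆ Set.Ioc (0 : ℝ) 1 :=
    Set.Ioc_subset_Ioc_right (by norm_num)
  have hsub2 : Set.Ioc (1 / 2 : ℝ) 1 ⊆ Set.Ioc (0 : ℝ) 1 :=
    Set.Ioc_subset_Ioc_left (by norm_num)
  -- properties of g
  have hgnn : ∀ x ∈ Set.Ioc (0 : ℝ) 1, 0 ≤ g x := fun x hx =>
    ge_of_tendsto (hg x hx) (Filter.Eventually.of_forall fun k => (hEbound (φ k) x hx).1)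
  have hgE : ∀ x ∈ Set.Ioc (0 : ℝ) 1, g x ≤ E x := fun x hx =>
    le_of_tendsto (hg x hx) (Filter.Eventually.of_forall fun k => (hEbound (φ k) x hx).2)
  have hganti1 : AntitoneOn g (Set.Ioc (0 : ℝ) (1 / 2)) := by
    intro x hx y hy hxy
    exact le_of_tendsto_of_tendsto' (hg y (hsub1 hy)) (hg x (hsub1 hx))
      fun k => (hf (φ k)).1.1.2.1 hx hy hxy
  have hganti2 : AntitoneOn g (Set.Ioc (1 / 2 : ℝ) 1) := by
    intro x hx y hy hxy
    exact le_of_tendsto_of_tendsto' (hg y (hsub2 hy)) (hg x (hsub2 hx))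
      fun k => (hf (φ k)).1.1.2.2.2.1 hx hy hxy
  have hgmono1 : MonotoneOn (fun x => x ^ d * g x) (Set.Ioc (0 : ℝ) (1 / 2)) := by
    intro x hx y hy hxy
    exact le_of_tendsto_of_tendsto' ((hg x (hsub1 hx)).const_mul (x ^ d))
      ((hg y (hsub1 hy)).const_mul (y ^ d)) fun k => (hf (φ k)).1.2.1 hx hy hxy
  have hgmono2 : MonotoneOn (fun x => (x - 1 / 2) ^ d * g x) (Set.Ioc (1 / 2 : ℝ) 1) := by
    intro x hx y hy hxy
    exact le_of_tendsto_of_tendsto' ((hg x (hsub2 hx)).const_mul ((x - 1 / 2) ^ d))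
      ((hg y (hsub2 hy)).const_mul ((y - 1 / 2) ^ d)) fun k => (hf (φ k)).1.2.2 hx hy hxy
  have hgcont1 : ContinuousOn g (Set.Ioc (0 : ℝ) (1 / 2)) := by
    refine contOn_of_sandwich hd0 (fun x hx => hgnn x (hsub1 hx))
      (sandwich_aux hd0 ?_ hganti1)
    simpa using hgmono1
  have hgcont2 : ContinuousOn g (Set.Ioc (1 / 2 : ℝ) 1) :=
    contOn_of_sandwich hd0 (fun x hx => hgnn x (hsub2 hx)) (sandwich_aux hd0 hgmono2 hganti2)
  have hgb1 : ∀ x ∈ Set.Ioc (0 : ℝ) (1 / 2), g x ≤ a₁ * x ^ (-(αmin + 1 - β)) := fun x hx =>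
    le_of_tendsto (hg x (hsub1 hx))
      (Filter.Eventually.of_forall fun k => (hf (φ k)).2.1 x hx)
  have hgb2 : ∀ x ∈ Set.Ioc (1 / 2 : ℝ) 1, g x ≤ a₂ * (x - 1 / 2) ^ (-(1 - β)) := fun x hx =>
    le_of_tendsto (hg x (hsub2 hx))
      (Filter.Eventually.of_forall fun k => (hf (φ k)).2.2.1 x hx)
  -- measurability and integrability of g
  have haesm : ∀ k, MeasureTheory.AEStronglyMeasurable (f (φ k))
      (volume.restrict (Set.Ioc (0 : ℝ) 1)) := fun k =>
    ((hf (φ k)).1.1.2.2.2.2.2).aestronglyMeasurable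
  have hgae : ∀ᵐ x ∂(volume.restrict (Set.Ioc (0 : ℝ) 1)),
      Filter.Tendsto (fun k => f (φ k) x) Filter.atTop (nhds (g x)) :=
    (MeasureTheory.ae_restrict_iff' measurableSet_Ioc).2 (Filter.Eventually.of_forall hg)
  have hgaesm : MeasureTheory.AEStronglyMeasurable g (volume.restrict (Set.Ioc (0 : ℝ) 1)) :=
    aestronglyMeasurable_of_tendsto_ae Filter.atTop haesm hgae
  have hgint : MeasureTheory.IntegrableOn g (Set.Ioc (0 : ℝ) 1) := by
    refine MeasureTheory.Integrable.mono' hEint hgaesm ?_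
    refine (MeasureTheory.ae_restrict_iff' measurableSet_Ioc).2 (Filter.Eventually.of_forall ?_)
    intro x hx
    rw [Real.norm_eq_abs, abs_of_nonneg (hgnn x hx)]
    exact hgE x hx
  -- L¹ convergence
  have hL1 : Filter.Tendsto (fun k => ∫ x in Set.Ioc (0 : ℝ) 1, |f (φ k) x - g x|)
      Filter.atTop (nhds 0) := by
    have hDCT := MeasureTheory.tendsto_integral_of_dominated_convergence
      (F := fun k x => |f (φ k) x - g x|) (f := fun _ : ℝ => (0 : ℝ)) (bound := E)
      (μ := volume.restrict (Set.Ioc (0 : ℝ) 1))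
      (fun k => ((haesm k).sub hgaesm).norm.congr
        (Filter.Eventually.of_forall fun x => by simp [Real.norm_eq_abs]))
      hEint
      (fun k => (MeasureTheory.ae_restrict_iff' measurableSet_Ioc).2
        (Filter.Eventually.of_forall fun x hx => by
          rw [Real.norm_eq_abs, abs_abs, abs_sub_le_iff]
          have h1 := hEbound (φ k) x hx
          have h2 := hgnn x hx
          have h3 := hgE x hx
          constructor <;> linarith [h1.1, h1.2]))
      ((MeasureTheory.ae_restrict_iff' measurableSet_Ioc).2
        (Filter.Eventually.of_forall fun x hx => by
          have := ((hg x hx).sub tendsto_const_nhds (g := fun _ => g x)).abs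
          rw [sub_self, abs_zero] at this
          exact this))
    simpa using hDCT
  -- integral of g equals 1
  have hgI : ∫ x in Set.Ioc (0 : ℝ) 1, g x = 1 := by
    have hdiff : Filter.Tendsto
        (fun k => (∫ x in Set.Ioc (0 : ℝ) 1, f (φ k) x) - ∫ x in Set.Ioc (0 : ℝ) 1, g x)
        Filter.atTop (nhds 0) := by
      refine squeeze_zero_norm (fun k => ?_) hL1
      rw [← MeasureTheory.integral_sub ((hf (φ k)).1.1.2.2.2.2.2) hgint]
      calc ‖∫ x in Set.Ioc (0 : ℝ) 1, (f (φ k) x - g x)‖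
          ≤ ∫ x in Set.Ioc (0 : ℝ) 1, ‖f (φ k) x - g x‖ :=
            MeasureTheory.norm_integral_le_integral_norm _
      _ = ∫ x in Set.Ioc (0 : ℝ) 1, |f (φ k) x - g x| := by
            simp only [Real.norm_eq_abs]
    have heq : (fun k => (∫ x in Set.Ioc (0 : ℝ) 1, f (φ k) x) - ∫ x in Set.Ioc (0 : ℝ) 1, g x)
        = fun _ => 1 - ∫ x in Set.Ioc (0 : ℝ) 1, g x := by
      funext k; rw [(hf (φ k)).2.2.2]
    rw [heq] at hdiff
    have := tendsto_nhds_unique hdiff tendsto_const_nhds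
    linarith
  refine ⟨g, ⟨⟨⟨hgnn, hganti1, hgcont1, hganti2, hgcont2, hgint⟩, hgmono1, hgmono2⟩,
    hgb1, hgb2, hgI⟩, φ, hφ, hL1⟩
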